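/- arXiv:2210.15798 — 8 statements merged into one kernel-verified Lean document; each statement's English description precedes it below -/
import Mathlib

section
/- Consider the discrete-time spreading model x(k+1) = [A − B(x(k))] x(k) on n nodes, where for spreading rates β_ij ≥ 0 (for edges (i,j) ∈ E, β_ij = 0 otherwise), recovery rates δ_i ≥ 0, and step size h > 0, the i-th component of the update is x_i(k+1) = (1 − h δ_i) x_i(k) + (1 − x_i(k)) h Σ_j β_ij x_j(k). If h δ_i ≤ 1 for every node i and h Σ_j β_ij ≤ 1 for every node i, then the hypercube [0,1]^n is forward invariant: x(k) ∈ [0,1]^n implies x(k+1) ∈ [0,1]^n, and hence x(0) ∈ [0,1]^n implies x(k) ∈ [0,1]^n for all k ∈ ℕ. -/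
/-- Forward invariance of the hypercube `[0,1]^n` for the
discrete-time spreading model
`x_i(k+1) = (1 - h δ_i) x_i(k) + (1 - x_i(k)) h Σ_j β_ij x_j(k)`. -/
theorem stmt0 {n : ℕ} (h : ℝ) (β : Fin n → Fin n → ℝ) (δ : Fin n → ℝ)
    (x : ℕ → Fin n → ℝ)
    (hh : 0 < h) (hβ : ∀ i j, 0 ≤ β i j) (hδ : ∀ i, 0 ≤ δ i)
    (hδ1 : ∀ i, h * δ i ≤ 1) (hβ1 : ∀ i, h * ∑ j, β i j ≤ 1)
    (hdyn : ∀ k i, x (k + 1) i =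
      (1 - h * δ i) * x k i + (1 - x k i) * (h * ∑ j, β i j * x k j)) :
    (∀ k, (∀ i, 0 ≤ x k i ∧ x k i ≤ 1) → ∀ i, 0 ≤ x (k + 1) i ∧ x (k + 1) i ≤ 1) ∧
    ((∀ i, 0 ≤ x 0 i ∧ x 0 i ≤ 1) → ∀ k i, 0 ≤ x k i ∧ x k i ≤ 1) := by
  have step : ∀ k, (∀ i, 0 ≤ x k i ∧ x k i ≤ 1) →
      ∀ i, 0 ≤ x (k + 1) i ∧ x (k + 1) i ≤ 1 := by
    intro k hk i
    obtain ⟨hx0, hx1⟩ := hk i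
    set s : ℝ := h * ∑ j, β i j * x k j with hs
    have hs0 : 0 ≤ s := by
      apply mul_nonneg hh.le
      exact Finset.sum_nonneg fun j _ => mul_nonneg (hβ i j) (hk j).1
    have hs1 : s ≤ 1 := by
      refine le_trans ?_ (hβ1 i)
      apply mul_le_mul_of_nonneg_left ?_ hh.le
      exact Finset.sum_le_sum fun j _ =>
        mul_le_of_le_one_right (hβ i j) (hk j).2
    have hd0 : 0 ≤ 1 - h * δ i := by linarith [hδ1 i]
    rw [hdyn k i, ← hs]
    constructor
    · have := mul_nonneg hd0 hx0
      have := mul_nonneg (by linarith : (0:ℝ) ≤ 1 - x k i) hs0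
      linarith
    · have h1 : (1 - h * δ i) * x k i ≤ x k i := by
        nlinarith [mul_nonneg (mul_nonneg hh.le (hδ i)) hx0]
      have h2 : (1 - x k i) * s ≤ 1 - x k i := by
        nlinarith
      linarith
  refine ⟨step, fun h0 k => ?_⟩
  induction k with
  | zero => exact h0
  | succ m ih => exact step m ih
end

section
/- Let C ∈ ℝ^{1×n} be an entrywise positive row vector, α ∈ (0,1], L ≥ 1, and let A(ℓ), ℓ ∈ ℕ, be entrywise nonnegative n×n matrices that are elementwise non-increasing in ℓ, i.e. A(ℓ) ≥ A(ℓ+1) for all ℓ. Suppose nonnegative row vectors p(0),…,p(L) satisfy p(ℓ) ≥ C + α p(ℓ+1) A(ℓ) for 0 ≤ ℓ ≤ L−1 and p(L) = p(L−1), and extend p(ℓ) = p(L−1) for ℓ > L. Then for the linear trajectory x̂(ℓ+1) = A(ℓ) x̂(ℓ) with x̂(0) ≥ 0, the bound R̄(x̂,ℓ) := p(ℓ) x̂(ℓ) satisfies R̄(x̂,ℓ) ≥ C x̂(ℓ) + α R̄(x̂,ℓ+1) for every ℓ ∈ ℕ. -/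
open Matrix

/-- If the nonnegative priority row vectors `p(ℓ)` satisfy the Bellman
inequalities `p(ℓ) ≥ C + α p(ℓ+1) A(ℓ)` for `0 ≤ ℓ ≤ L−1` with `p(L) = p(L−1)` and
`p(ℓ) = p(L−1)` for `ℓ > L`, and the nonnegative matrices `A(ℓ)` are elementwise
non-increasing, then along the linear trajectory `x̂(ℓ+1) = A(ℓ) x̂(ℓ)` with `x̂(0) ≥ 0`
the bound `R̄(x̂,ℓ) = p(ℓ) x̂(ℓ)` satisfies `R̄(x̂,ℓ) ≥ C x̂(ℓ) + α R̄(x̂,ℓ+1)` for all ℓ. -/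
theorem stmt2 {n L : ℕ} (hL : 1 ≤ L) (C : Fin n → ℝ) (α : ℝ)
    (A : ℕ → Matrix (Fin n) (Fin n) ℝ) (p : ℕ → Fin n → ℝ) (xh : ℕ → Fin n → ℝ)
    (hC : ∀ i, 0 < C i) (hα : 0 < α ∧ α ≤ 1)
    (hA : ∀ ℓ i j, 0 ≤ A ℓ i j) (hAmono : ∀ ℓ i j, A (ℓ + 1) i j ≤ A ℓ i j)
    (hp0 : ∀ ℓ i, 0 ≤ p ℓ i)
    (hbell : ∀ ℓ < L, ∀ i, C i + α * (p (ℓ + 1) ᵥ* A ℓ) i ≤ p ℓ i)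
    (hterm : p L = p (L - 1)) (hext : ∀ ℓ, L < ℓ → p ℓ = p (L - 1))
    (hxh : ∀ ℓ, xh (ℓ + 1) = A ℓ *ᵥ xh ℓ) (hx0 : ∀ i, 0 ≤ xh 0 i) :
    ∀ ℓ, C ⬝ᵥ xh ℓ + α * (p (ℓ + 1) ⬝ᵥ xh (ℓ + 1)) ≤ p ℓ ⬝ᵥ xh ℓ := by
  obtain ⟨hα0, hα1⟩ := hα
  have hxnn : ∀ ℓ i, 0 ≤ xh ℓ i := by
    intro ℓ
    induction ℓ with
    | zero => exact hx0
    | succ k ih =>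
      intro i
      rw [hxh]
      simp only [Matrix.mulVec, dotProduct]
      exact Finset.sum_nonneg fun j _ => mul_nonneg (hA k i j) (ih j)
  have hAle : ∀ m k, m ≤ k → ∀ i j, A k i j ≤ A m i j := by
    intro m k hmk i j
    have : Antitone fun k => A k i j := antitone_nat_of_succ_le fun ℓ => hAmono ℓ i j
    exact this hmk
  have hpL : ∀ m, L ≤ m → p m = p (L - 1) := by
    intro m hm
    rcases eq_or_lt_of_le hm with h | h
    · rw [← h]; exact hterm
    · exact hext m h
  have key : ∀ (ℓ : ℕ) (q r : Fin n → ℝ), (∀ i, C i + α * (q ᵥ* A ℓ) i ≤ r i) →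
      C ⬝ᵥ xh ℓ + α * (q ⬝ᵥ xh (ℓ + 1)) ≤ r ⬝ᵥ xh ℓ := by
    intro ℓ q r hb
    rw [hxh, Matrix.dotProduct_mulVec]
    have heq : C ⬝ᵥ xh ℓ + α * ((q ᵥ* A ℓ) ⬝ᵥ xh ℓ)
        = ∑ i, (C i + α * (q ᵥ* A ℓ) i) * xh ℓ i := by
      simp [dotProduct, Finset.mul_sum, add_mul, Finset.sum_add_distrib, mul_assoc]
    rw [heq]
    exact Finset.sum_le_sum fun i _ => mul_le_mul_of_nonneg_right (hb i) (hxnn ℓ i)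
  intro ℓ
  rcases lt_or_ge ℓ L with h | h
  · exact key ℓ (p (ℓ + 1)) (p ℓ) (hbell ℓ h)
  · rw [hpL ℓ h, hpL (ℓ + 1) (by omega)]
    apply key ℓ (p (L - 1)) (p (L - 1))
    intro i
    have hb := hbell (L - 1) (by omega) i
    rw [show L - 1 + 1 = L by omega, hterm] at hb
    refine le_trans ?_ hb
    have : ((p (L - 1)) ᵥ* A ℓ) i ≤ ((p (L - 1)) ᵥ* A (L - 1)) i := by
      simp only [Matrix.vecMul, dotProduct]
      exact Finset.sum_le_sum fun j _ =>
        mul_le_mul_of_nonneg_left (hAle (L - 1) ℓ (by omega) j i) (hp0 (L - 1) j)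
    nlinarith
end

section
/- (Proposition 2, for a fixed matrix sequence) Fix α > 0, an entrywise positive row vector C ∈ ℝ^{1×n}, ε > 0, a vector x ≥ 0, and entrywise nonnegative n×n matrices A(0),…,A(L−1), each with strictly positive diagonal entries. Consider the feasible set of sequences of row vectors p(0),…,p(L) with p(ℓ) ≥ 0, p(ℓ) ≥ C + α p(ℓ+1) A(ℓ) for 0 ≤ ℓ ≤ L−1, and p(L) = p(L−1). If p* minimizes the cost R̄_ε(p,x) = p(0)·x + ε Σ_i p_i(0) over this feasible set, then p* satisfies the Bellman equation with equality: p*(ℓ) = C + α p*(ℓ+1) A(ℓ) for all 0 ≤ ℓ ≤ L−1. -/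
open Matrix

/-- Proposition 2, fixed matrix sequence: a minimizer of the
ε-regularized risk bound `R̄_ε(p,x) = p(0)·x + ε Σ_i p_i(0)` over the feasible set
of priority-vector sequences satisfies the Bellman equation with equality. -/
theorem stmt7 {n L : ℕ} (hL : 1 ≤ L) (α : ℝ) (hα : 0 < α)
    (C : Fin n → ℝ) (hC : ∀ i, 0 < C i) (ε : ℝ) (hε : 0 < ε)
    (x : Fin n → ℝ) (hx : ∀ i, 0 ≤ x i)
    (A : ℕ → Matrix (Fin n) (Fin n) ℝ)
    (hA : ∀ ℓ i j, 0 ≤ A ℓ i j) (hdiag : ∀ ℓ i, 0 < A ℓ i i)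
    (pstar : ℕ → Fin n → ℝ)
    (hfeas : (∀ ℓ < L, (∀ i, 0 ≤ pstar ℓ i) ∧
        (∀ i, C i + α * (pstar (ℓ + 1) ᵥ* A ℓ) i ≤ pstar ℓ i)) ∧
      pstar L = pstar (L - 1))
    (hopt : ∀ q : ℕ → Fin n → ℝ,
      ((∀ ℓ < L, (∀ i, 0 ≤ q ℓ i) ∧
          (∀ i, C i + α * (q (ℓ + 1) ᵥ* A ℓ) i ≤ q ℓ i)) ∧
        q L = q (L - 1)) →
      pstar 0 ⬝ᵥ x + ε * ∑ i, pstar 0 i ≤ q 0 ⬝ᵥ x + ε * ∑ i, q 0 i) :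
    ∀ ℓ < L, ∀ i, pstar ℓ i = C i + α * (pstar (ℓ + 1) ᵥ* A ℓ) i := by
  obtain ⟨hf, hLe⟩ := hfeas
  -- nonnegativity of pstar up to level L
  have hnn : ∀ ℓ ≤ L, ∀ i, 0 ≤ pstar ℓ i := by
    intro ℓ hℓ i
    rcases Nat.lt_or_ge ℓ L with h | h
    · exact (hf ℓ h).1 i
    · have hEq : ℓ = L := le_antisymm hℓ h
      rw [hEq, hLe]
      exact (hf (L-1) (by omega)).1 i
  -- vecMul monotonicity lemmas
  have hvm : ∀ (u v : Fin n → ℝ) (ℓ : ℕ) (j : Fin n), (∀ k, u k ≤ v k) →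
      (u ᵥ* A ℓ) j ≤ (v ᵥ* A ℓ) j := by
    intro u v ℓ j h
    simp only [Matrix.vecMul, dotProduct]
    exact Finset.sum_le_sum fun k _ => mul_le_mul_of_nonneg_right (h k) (hA ℓ k j)
  have hvm0 : ∀ (u : Fin n → ℝ) (ℓ : ℕ) (j : Fin n), (∀ k, 0 ≤ u k) →
      0 ≤ (u ᵥ* A ℓ) j := by
    intro u ℓ j h
    simp only [Matrix.vecMul, dotProduct]
    exact Finset.sum_nonneg fun k _ => mul_nonneg (h k) (hA ℓ k j)
  have hvmlt : ∀ (u v : Fin n → ℝ) (ℓ : ℕ) (j : Fin n), (∀ k, u k ≤ v k) → u j < v j →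
      (u ᵥ* A ℓ) j < (v ᵥ* A ℓ) j := by
    intro u v ℓ j h hj
    simp only [Matrix.vecMul, dotProduct]
    exact Finset.sum_lt_sum (fun k _ => mul_le_mul_of_nonneg_right (h k) (hA ℓ k j))
      ⟨j, Finset.mem_univ j, by
        exact mul_lt_mul_of_pos_right hj (hdiag ℓ j)⟩
  intro ℓ₀ hℓ₀ i
  refine le_antisymm ?_ ((hf ℓ₀ hℓ₀).2 i)
  by_contra hlt
  push_neg at hlt
  -- backward Bellman iterates seeded at pstar (ℓ₀+1)
  set g : ℕ → Fin n → ℝ := fun m => Nat.rec (pstar (ℓ₀+1))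
    (fun k v => fun j => C j + α * (v ᵥ* A (ℓ₀ - k)) j) m with hgdef
  have hg0 : g 0 = pstar (ℓ₀+1) := rfl
  have hgs : ∀ k j, g (k+1) j = C j + α * (g k ᵥ* A (ℓ₀ - k)) j := fun k j => rfl
  have hg1 : ∀ j, g 1 j = C j + α * (pstar (ℓ₀+1) ᵥ* A ℓ₀) j := fun j => hgs 0 j
  have hgnn : ∀ m j, 0 ≤ g m j := by
    intro m
    induction m with
    | zero => intro j; rw [hg0]; exact hnn (ℓ₀+1) (by omega) j
    | succ k ih =>
      intro j
      rw [hgs]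
      have := hvm0 (g k) (ℓ₀ - k) j ih
      nlinarith [hC j]
  have hgle : ∀ m, m ≤ ℓ₀+1 → ∀ j, g m j ≤ pstar (ℓ₀+1-m) j := by
    intro m
    induction m with
    | zero => intro _ j; rw [hg0]; simp
    | succ k ih =>
      intro hm j
      have hk : k ≤ ℓ₀ := by omega
      have h2 : (g k ᵥ* A (ℓ₀-k)) j ≤ (pstar (ℓ₀+1-k) ᵥ* A (ℓ₀-k)) j :=
        hvm _ _ _ _ (fun t => ih (by omega) t)
      have h3 := (hf (ℓ₀-k) (by omega)).2 j
      rw [show ℓ₀ - k + 1 = ℓ₀ + 1 - k from by omega] at h3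
      rw [show ℓ₀+1-(k+1) = ℓ₀-k from by omega, hgs]
      nlinarith
  have hgst : ∀ m, 1 ≤ m → m ≤ ℓ₀+1 → g m i < pstar (ℓ₀+1-m) i := by
    intro m
    induction m with
    | zero => omega
    | succ k ih =>
      intro _ hm
      rcases Nat.eq_zero_or_pos k with hk0 | hkpos
      · subst hk0
        have hg1' : g (0+1) i = C i + α * (pstar (ℓ₀+1) ᵥ* A ℓ₀) i := hg1 i
        rw [hg1']
        simpa using hlt
      · have hk : k ≤ ℓ₀ := by omega
        have h2 : (g k ᵥ* A (ℓ₀-k)) i < (pstar (ℓ₀+1-k) ᵥ* A (ℓ₀-k)) i :=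
          hvmlt _ _ _ _ (fun t => hgle k (by omega) t) (ih hkpos (by omega))
        have h3 := (hf (ℓ₀-k) (by omega)).2 i
        rw [show ℓ₀ - k + 1 = ℓ₀ + 1 - k from by omega] at h3
        rw [show ℓ₀+1-(k+1) = ℓ₀-k from by omega, hgs]
        nlinarith
  -- the perturbed sequence
  set q : ℕ → Fin n → ℝ := fun ℓ =>
    if ℓ ≤ ℓ₀ then g (ℓ₀+1-ℓ) else if ℓ₀ = L - 1 then g 1 else pstar ℓ with hqdef
  have hqa : ∀ ℓ, ℓ ≤ ℓ₀ → q ℓ = g (ℓ₀+1-ℓ) := by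
    intro ℓ h; simp only [hqdef, if_pos h]
  have hqb : ℓ₀ = L - 1 → ∀ ℓ, ℓ₀ < ℓ → q ℓ = g 1 := by
    intro h2 ℓ h; simp only [hqdef, if_neg (by omega : ¬ ℓ ≤ ℓ₀), if_pos h2]
  have hqc : ℓ₀ ≠ L - 1 → ∀ ℓ, ℓ₀ < ℓ → q ℓ = pstar ℓ := by
    intro h2 ℓ h; simp only [hqdef, if_neg (by omega : ¬ ℓ ≤ ℓ₀), if_neg h2]
  have hqfeas : (∀ ℓ < L, (∀ j, 0 ≤ q ℓ j) ∧
      (∀ j, C j + α * (q (ℓ + 1) ᵥ* A ℓ) j ≤ q ℓ j)) ∧ q L = q (L - 1) := by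
    constructor
    · intro ℓ hℓ
      constructor
      · intro j
        by_cases h1 : ℓ ≤ ℓ₀
        · rw [hqa ℓ h1]; exact hgnn _ j
        · by_cases h2 : ℓ₀ = L - 1
          · rw [hqb h2 ℓ (by omega)]; exact hgnn 1 j
          · rw [hqc h2 ℓ (by omega)]; exact (hf ℓ hℓ).1 j
      · intro j
        rcases lt_trichotomy ℓ ℓ₀ with h1 | h1 | h1
        · -- ℓ < ℓ₀ : equality by definition of g
          rw [hqa ℓ h1.le, hqa (ℓ+1) h1]
          rw [show ℓ₀+1-(ℓ+1) = ℓ₀-ℓ from by omega,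
            show ℓ₀+1-ℓ = (ℓ₀-ℓ)+1 from by omega, hgs,
            show ℓ₀ - (ℓ₀-ℓ) = ℓ from by omega]
        · -- ℓ = ℓ₀
          subst h1
          rw [hqa ℓ le_rfl, show ℓ+1-ℓ = 1 from by omega, hg1 j]
          by_cases h2 : ℓ = L - 1
          · rw [hqb h2 (ℓ+1) (by omega)]
            have hps : pstar (ℓ+1) = pstar ℓ := by
              rw [show ℓ + 1 = L from by omega, hLe, ← h2]
            have hle1 : ∀ t, g 1 t ≤ pstar (ℓ+1) t := by
              intro t
              rw [hps]
              simpa using hgle 1 (by omega) t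
            have := hvm (g 1) (pstar (ℓ+1)) ℓ j hle1
            nlinarith
          · rw [hqc h2 (ℓ+1) (by omega)]
        · -- ℓ₀ < ℓ
          have h2 : ℓ₀ ≠ L - 1 := by omega
          rw [hqc h2 ℓ h1, hqc h2 (ℓ+1) (by omega)]
          exact (hf ℓ hℓ).2 j
    · by_cases h2 : ℓ₀ = L - 1
      · rw [hqb h2 L (by omega), hqa (L-1) (by omega),
          show ℓ₀+1-(L-1) = 1 from by omega]
      · rw [hqc h2 L (by omega), hqc h2 (L-1) (by omega), hLe]
  have hcost := hopt q hqfeas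
  have hq0 : q 0 = g (ℓ₀+1) := hqa 0 (by omega)
  have hle0 : ∀ t, q 0 t ≤ pstar 0 t := by
    intro t
    rw [hq0]
    simpa using hgle (ℓ₀+1) le_rfl t
  have hlt0 : q 0 i < pstar 0 i := by
    rw [hq0]
    simpa using hgst (ℓ₀+1) (by omega) le_rfl
  have hdot : q 0 ⬝ᵥ x ≤ pstar 0 ⬝ᵥ x := by
    simp only [dotProduct]
    exact Finset.sum_le_sum fun t _ => mul_le_mul_of_nonneg_right (hle0 t) (hx t)
  have hsum : ∑ t, q 0 t < ∑ t, pstar 0 t :=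
    Finset.sum_lt_sum (fun t _ => hle0 t) ⟨i, Finset.mem_univ i, hlt0⟩
  nlinarith
end

section
/- (Proposition 3, second part) Let α > 0, let C ∈ ℝ^{1×n} be entrywise positive, and let A(0),…,A(L−1) be entrywise nonnegative n×n matrices with A(ℓ−1) ⪈ A(ℓ) for 1 ≤ ℓ ≤ L−1. Let p(L−1) be a nonnegative row vector satisfying the stationarity condition p(L−1) = C + α p(L−1) A(L−1), and define p(ℓ) = C + α p(ℓ+1) A(ℓ) for ℓ = L−2, …, 0. Then the priority vectors are strictly decreasing along the horizon: p(ℓ−1) ⪈ p(ℓ) for every 1 ≤ ℓ ≤ L−1. -/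
open Matrix

/-- Proposition 3, second part: if the nonnegative matrices satisfy
`A(ℓ−1) ⪈ A(ℓ)` for `1 ≤ ℓ ≤ L−1`, the terminal priority vector `p(L−1) ≥ 0` is
stationary, `p(L−1) = C + α p(L−1) A(L−1)`, and `p(ℓ) = C + α p(ℓ+1) A(ℓ)` for
`ℓ = L−2,…,0`, then `p(ℓ−1) ⪈ p(ℓ)` for `1 ≤ ℓ ≤ L−1`
(formulated as `p(ℓ) ⪈ p(ℓ+1)` for `ℓ + 2 ≤ L`). -/
theorem stmt9 {n L : ℕ} (hL : 1 ≤ L) (α : ℝ) (hα : 0 < α)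
    (C : Fin n → ℝ) (hC : ∀ i, 0 < C i)
    (A : ℕ → Matrix (Fin n) (Fin n) ℝ)
    (hA : ∀ ℓ i j, 0 ≤ A ℓ i j)
    (hAmono : ∀ ℓ, ℓ + 2 ≤ L → (∀ i j, A (ℓ + 1) i j ≤ A ℓ i j) ∧ A ℓ ≠ A (ℓ + 1))
    (p : ℕ → Fin n → ℝ)
    (hpL : ∀ i, 0 ≤ p (L - 1) i)
    (hstat : ∀ i, p (L - 1) i = C i + α * (p (L - 1) ᵥ* A (L - 1)) i)
    (hrec : ∀ ℓ, ℓ + 2 ≤ L → ∀ i, p ℓ i = C i + α * (p (ℓ + 1) ᵥ* A ℓ) i) :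
    ∀ ℓ, ℓ + 2 ≤ L → (∀ i, p (ℓ + 1) i ≤ p ℓ i) ∧ p ℓ ≠ p (ℓ + 1) := by
  have hvm : ∀ (v : Fin n → ℝ) (M : Matrix (Fin n) (Fin n) ℝ) (j : Fin n),
      (v ᵥ* M) j = ∑ i, v i * M i j := by
    intro v M j; simp [Matrix.vecMul, dotProduct]
  -- positivity: every priority vector dominates C
  have hpos : ∀ d m, L - 1 - m ≤ d → m + 1 ≤ L → ∀ i, C i ≤ p m i := by
    intro d
    induction d with
    | zero =>
      intro m h1 h2 i
      have hm : m = L - 1 := by omega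
      subst hm
      have hnn : 0 ≤ (p (L - 1) ᵥ* A (L - 1)) i := by
        rw [hvm]; exact Finset.sum_nonneg fun k _ => mul_nonneg (hpL k) (hA _ k i)
      have hs := hstat i
      nlinarith
    | succ d ih =>
      intro m h1 h2 i
      by_cases hm : m + 1 = L
      · have hm' : m = L - 1 := by omega
        subst hm'
        have hnn : 0 ≤ (p (L - 1) ᵥ* A (L - 1)) i := by
          rw [hvm]; exact Finset.sum_nonneg fun k _ => mul_nonneg (hpL k) (hA _ k i)
        have hs := hstat i
        nlinarith
      · have hm2 : m + 2 ≤ L := by omega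
        have hq : ∀ k, 0 ≤ p (m + 1) k := fun k =>
          le_trans (hC k).le (ih (m + 1) (by omega) (by omega) k)
        have hnn : 0 ≤ (p (m + 1) ᵥ* A m) i := by
          rw [hvm]; exact Finset.sum_nonneg fun k _ => mul_nonneg (hq k) (hA _ k i)
        have hs := hrec m hm2 i
        nlinarith
  -- key comparison step
  have key : ∀ ℓ, ℓ + 2 ≤ L → ∀ r : Fin n → ℝ,
      (∀ i, C i ≤ r i) → (∀ i, r i ≤ p (ℓ + 1) i) →
      (∀ i, p (ℓ + 1) i = C i + α * (r ᵥ* A (ℓ + 1)) i) →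
      (∀ i, p (ℓ + 1) i ≤ p ℓ i) ∧ p ℓ ≠ p (ℓ + 1) := by
    intro ℓ hℓ2 r hr1 hr2 hq
    have hle := (hAmono ℓ hℓ2).1
    have hterm : ∀ (i : Fin n) (k : Fin n),
        r k * A (ℓ + 1) k i ≤ p (ℓ + 1) k * A ℓ k i := by
      intro i k
      calc r k * A (ℓ + 1) k i ≤ r k * A ℓ k i :=
            mul_le_mul_of_nonneg_left (hle k i) (le_trans (hC k).le (hr1 k))
        _ ≤ p (ℓ + 1) k * A ℓ k i := mul_le_mul_of_nonneg_right (hr2 k) (hA ℓ k i)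
    constructor
    · intro i
      have h1 : (r ᵥ* A (ℓ + 1)) i ≤ (p (ℓ + 1) ᵥ* A ℓ) i := by
        rw [hvm, hvm]
        exact Finset.sum_le_sum fun k _ => hterm i k
      have h2 := hrec ℓ hℓ2 i
      have h3 := hq i
      nlinarith
    · obtain ⟨i0, j0, hs⟩ : ∃ i j, A (ℓ + 1) i j < A ℓ i j := by
        by_contra h
        push_neg at h
        exact (hAmono ℓ hℓ2).2 (Matrix.ext fun i j => le_antisymm (h i j) (hle i j))
      intro heq
      have hj : (r ᵥ* A (ℓ + 1)) j0 < (p (ℓ + 1) ᵥ* A ℓ) j0 := by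
        rw [hvm, hvm]
        apply Finset.sum_lt_sum (fun k _ => hterm j0 k)
        refine ⟨i0, Finset.mem_univ i0, ?_⟩
        have hr0 : 0 < r i0 := lt_of_lt_of_le (hC i0) (hr1 i0)
        calc r i0 * A (ℓ + 1) i0 j0 < r i0 * A ℓ i0 j0 :=
              mul_lt_mul_of_pos_left hs hr0
          _ ≤ p (ℓ + 1) i0 * A ℓ i0 j0 :=
              mul_le_mul_of_nonneg_right (hr2 i0) (hA ℓ i0 j0)
      have h1 := hrec ℓ hℓ2 j0
      have h2 := hq j0
      have hlt : p (ℓ + 1) j0 < p ℓ j0 := by nlinarith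
      rw [heq] at hlt
      exact lt_irrefl _ hlt
  -- main downward induction
  have main : ∀ d ℓ, L - ℓ ≤ d → ℓ + 2 ≤ L →
      (∀ i, p (ℓ + 1) i ≤ p ℓ i) ∧ p ℓ ≠ p (ℓ + 1) := by
    intro d
    induction d with
    | zero => intro ℓ h1 h2; omega
    | succ d ih =>
      intro ℓ h1 h2
      by_cases hend : ℓ + 2 = L
      · have e : L - 1 = ℓ + 1 := by omega
        exact key ℓ h2 (p (ℓ + 1))
          (fun i => hpos L (ℓ + 1) (by omega) (by omega) i)
          (fun i => le_refl _)
          (fun i => by rw [← e]; exact hstat i)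
      · have h3 : (ℓ + 1) + 2 ≤ L := by omega
        have ihstep := ih (ℓ + 1) (by omega) (by omega)
        exact key ℓ h2 (p (ℓ + 2))
          (fun i => hpos L (ℓ + 2) (by omega) (by omega) i)
          ihstep.1
          (hrec (ℓ + 1) h3)
  exact fun ℓ h => main L ℓ (by omega) h
end

section
/- (Recursive feasibility, Theorem 1, first part) Let α > 0, C ∈ ℝ^{1×n} a row vector, and suppose row vectors p(0),…,p(L) and nonnegative matrices A(0),…,A(L−1) satisfy: p(ℓ) ≥ 0 and p(ℓ) ≥ C + α p(ℓ+1) A(ℓ) for 0 ≤ ℓ ≤ L−1, with p(L) = p(L−1). Define the shifted sequences p'(ℓ) = p(ℓ+1) for 0 ≤ ℓ ≤ L−2, p'(L−1) = p(L−1) = p'(L), and A'(ℓ) = A(ℓ+1) for 0 ≤ ℓ ≤ L−2, A'(L−1) = A(L−1). Then the shifted sequences are again feasible: p'(ℓ) ≥ 0 and p'(ℓ) ≥ C + α p'(ℓ+1) A'(ℓ) for all 0 ≤ ℓ ≤ L−1, with p'(L) = p'(L−1). Moreover, if A(ℓ−1) ≥ A(ℓ) for 0 ≤ ℓ ≤ L−1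 (with a given A(−1)), then A'(ℓ−1) ≥ A'(ℓ) for 0 ≤ ℓ ≤ L−1 with A'(−1) := A(0). -/
open Matrix

/-- Theorem 1, recursive feasibility: the one-time-step shift
`p'(ℓ) = p(ℓ+1)` (ℓ ≤ L−2), `p'(L−1) = p(L−1) = p'(L)`, `A'(ℓ) = A(ℓ+1)` (ℓ ≤ L−2),
`A'(L−1) = A(L−1)` of a feasible pair `(p, A)` is again feasible, and the shifted
matrix sequence remains elementwise non-increasing (with `A'(−1) := A(0)`). -/
theorem stmt10 {n L : ℕ} (hL : 1 ≤ L) (α : ℝ) (C : Fin n → ℝ)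
    (A A' : ℕ → Matrix (Fin n) (Fin n) ℝ) (Am1 : Matrix (Fin n) (Fin n) ℝ)
    (p p' : ℕ → Fin n → ℝ)
    (hA : ∀ ℓ i j, 0 ≤ A ℓ i j)
    (hp0 : ∀ ℓ < L, ∀ i, 0 ≤ p ℓ i)
    (hbell : ∀ ℓ < L, ∀ i, C i + α * (p (ℓ + 1) ᵥ* A ℓ) i ≤ p ℓ i)
    (hterm : p L = p (L - 1))
    (hp'def : ∀ ℓ, ℓ + 2 ≤ L → p' ℓ = p (ℓ + 1))
    (hp'L1 : p' (L - 1) = p (L - 1)) (hp'L : p' L = p (L - 1))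
    (hA'def : ∀ ℓ, ℓ + 2 ≤ L → A' ℓ = A (ℓ + 1))
    (hA'L1 : A' (L - 1) = A (L - 1)) :
    ((∀ ℓ < L, (∀ i, 0 ≤ p' ℓ i) ∧
        (∀ i, C i + α * (p' (ℓ + 1) ᵥ* A' ℓ) i ≤ p' ℓ i)) ∧
      p' L = p' (L - 1)) ∧
    ((∀ i j, A 0 i j ≤ Am1 i j) →
      (∀ ℓ, ℓ + 1 < L → ∀ i j, A (ℓ + 1) i j ≤ A ℓ i j) →
      (∀ i j, A' 0 i j ≤ A 0 i j) ∧
        ∀ ℓ, ℓ + 1 < L → ∀ i j, A' (ℓ + 1) i j ≤ A' ℓ i j) := by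
  refine ⟨⟨fun ℓ hℓ => ?_, by rw [hp'L, hp'L1]⟩, fun _ hmono => ⟨?_, fun ℓ hℓ => ?_⟩⟩
  · by_cases h2 : ℓ + 2 ≤ L
    · have hpℓ : p' ℓ = p (ℓ + 1) := hp'def ℓ h2
      refine ⟨fun i => hpℓ ▸ hp0 (ℓ + 1) (by omega) i, fun i => ?_⟩
      have hAℓ : A' ℓ = A (ℓ + 1) := hA'def ℓ h2
      have hp1 : p' (ℓ + 1) = p (ℓ + 2) := by
        by_cases h3 : ℓ + 3 ≤ L
        · exact hp'def (ℓ + 1) h3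
        · have hLe : L = ℓ + 2 := by omega
          have : p' (ℓ + 1) = p (L - 1) := by rw [show ℓ + 1 = L - 1 by omega]; exact hp'L1
          rw [this, ← hterm, hLe]
      rw [hpℓ, hAℓ, hp1]
      exact hbell (ℓ + 1) (by omega) i
    · have hℓ1 : ℓ = L - 1 := by omega
      subst hℓ1
      refine ⟨fun i => hp'L1 ▸ hp0 (L - 1) (by omega) i, fun i => ?_⟩
      have h := hbell (L - 1) (by omega) i
      rw [show L - 1 + 1 = L by omega, hterm] at h
      rw [hp'L1, hA'L1, show L - 1 + 1 = L by omega, hp'L]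
      exact h
  · by_cases h2 : 2 ≤ L
    · rw [hA'def 0 h2]; exact hmono 0 (by omega)
    · have : L = 1 := by omega
      rw [show A' 0 = A' (L - 1) by rw [this], hA'L1, this]
      exact fun i j => le_refl _
  · by_cases h3 : ℓ + 3 ≤ L
    · rw [hA'def (ℓ + 1) h3, hA'def ℓ (by omega)]
      exact hmono (ℓ + 1) (by omega)
    · have hLe : L = ℓ + 2 := by omega
      rw [hA'def ℓ (by omega), show ℓ + 1 = L - 1 by omega, hA'L1,
        show L - 1 = ℓ + 1 by omega]
      exact fun i j => le_refl _
end

section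
/- Let A be an entrywise nonnegative n×n matrix, α ∈ (0,1], and C ∈ ℝ^{1×n} an entrywise positive row vector such that C A < C elementwise (equivalently, Σ_i c_i A_ij < c_j for every column j). Suppose I − αA is invertible with entrywise nonnegative inverse (as holds when α ρ(A) < 1). Then the stationary priority vector p = C(I − αA)^{−1} satisfies C − (1−α) p > 0 elementwise. -/
open Matrix

/-- If the nonnegative matrix `A` satisfies `C A < C` elementwise
(membership in the set 𝒜 of Assumption 2) and `I − αA` has a nonnegative inverse,
then the stationary priority vector `p = C(I − αA)⁻¹` satisfies
`C − (1−α) p > 0` elementwise. -/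
theorem stmt11 {n : ℕ} (α : ℝ) (hα : 0 < α ∧ α ≤ 1)
    (C : Fin n → ℝ) (hC : ∀ i, 0 < C i)
    (A : Matrix (Fin n) (Fin n) ℝ) (hA : ∀ i j, 0 ≤ A i j)
    (hstab : ∀ j, (C ᵥ* A) j < C j)
    (hinv : IsUnit (1 - α • A)) (hN : ∀ i j, 0 ≤ (1 - α • A)⁻¹ i j) :
    ∀ j, 0 < C j - (1 - α) * (C ᵥ* (1 - α • A)⁻¹) j := by
  obtain ⟨hα0, hα1⟩ := hα
  set M : Matrix (Fin n) (Fin n) ℝ := 1 - α • A with hM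
  set N : Matrix (Fin n) (Fin n) ℝ := M⁻¹ with hNdef
  have hdet : IsUnit M.det := (Matrix.isUnit_iff_isUnit_det M).mp hinv
  have h1 : M * N = 1 := Matrix.mul_nonsing_inv M hdet
  have h2 : N * M = 1 := Matrix.nonsing_inv_mul M hdet
  have hcommMA : M * A = A * M := by
    simp [hM, sub_mul, mul_sub, Matrix.smul_mul, Matrix.mul_smul]
  have hcomm : A * N = N * A := by
    calc A * N = (N * M) * A * N := by rw [h2, one_mul]
      _ = N * (M * A) * N := by rw [mul_assoc N M A]
      _ = N * (A * M) * N := by rw [hcommMA]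
      _ = N * A * (M * N) := by rw [← mul_assoc N A M, mul_assoc (N * A) M N]
      _ = N * A := by rw [h1, mul_one]
  have hNA : ∀ i j, 0 ≤ (N * A) i j := by
    intro i j
    rw [Matrix.mul_apply]
    exact Finset.sum_nonneg fun k _ => mul_nonneg (hN i k) (hA k j)
  have hNeq : N = 1 + α • (N * A) := by
    have h3 : N - α • (N * A) = 1 := by
      calc N - α • (N * A) = N * M := by
            simp [hM, mul_sub, Matrix.mul_smul]
        _ = 1 := h2
    linear_combination (norm := module) h3
  have hNdiag : ∀ j, 1 ≤ N j j := by
    intro j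
    conv_rhs => rw [hNeq]
    simp only [Matrix.add_apply, Matrix.smul_apply, Matrix.one_apply_eq, smul_eq_mul]
    nlinarith [hNA j j]
  -- p = C ᵥ* N
  set p : Fin n → ℝ := C ᵥ* N with hp
  have hpM : p ᵥ* M = C := by
    rw [hp, Matrix.vecMul_vecMul, h2, Matrix.vecMul_one]
  have hpA : p ᵥ* A = (C ᵥ* A) ᵥ* N := by
    rw [hp, Matrix.vecMul_vecMul, Matrix.vecMul_vecMul, hcomm]
  intro j
  have hCj : C j = p j - α * (p ᵥ* A) j := by
    rw [← hpM]
    simp only [hM, Matrix.vecMul, dotProduct, Matrix.sub_apply, Matrix.smul_apply,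
      Matrix.one_apply, smul_eq_mul, mul_sub, Finset.sum_sub_distrib, Finset.mul_sum,
      mul_ite, mul_one, mul_zero, Finset.sum_ite_eq', Finset.mem_univ, if_true]
    ring_nf
    congr 1
    apply Finset.sum_congr rfl
    intro i _
    ring
  have key : 0 < p j - (p ᵥ* A) j := by
    have hdiff : p j - (p ᵥ* A) j = ∑ i, (C i - (C ᵥ* A) i) * N i j := by
      rw [hp, hpA]
      simp only [Matrix.vecMul, dotProduct, sub_mul]
      rw [Finset.sum_sub_distrib]
    rw [hdiff]
    have hterm : ∀ i ∈ Finset.univ, (0:ℝ) ≤ (C i - (C ᵥ* A) i) * N i j :=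
      fun i _ => mul_nonneg (by linarith [hstab i]) (hN i j)
    have hj : (C j - (C ᵥ* A) j) * N j j ≤ ∑ i, (C i - (C ᵥ* A) i) * N i j :=
      Finset.single_le_sum hterm (Finset.mem_univ j)
    have hjpos : 0 < (C j - (C ᵥ* A) j) * N j j := by
      have := hstab j
      nlinarith [hNdiag j]
    linarith
  have : C j - (1 - α) * p j = α * (p j - (p ᵥ* A) j) := by
    rw [hCj]; ring
  rw [this]
  positivity
end

section
/- (One-step risk-bound decrease, key inequality of Theorem 1) Let α ∈ (0,1], C ∈ ℝ^{1×n} a row vector, A an entrywise nonnegative n×n matrix, and p₀, p₁ nonnegative row vectors with p₀ = C + α p₁ A. Suppose C − (1−α) p₀ > 0 elementwise. Then for every x ⪈ 0 (x ≥ 0 with at least one positive entry) and every x′ with 0 ≤ x′ ≤ A x, we have p₀ x − p₁ x′ ≥ p₀ x − p₁ A x = (1/α) [C − (1−α) p₀] x > 0. -/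
open Matrix

/-- key inequality of Theorem 1: if `p₀ = C + α p₁ A` with
`C − (1−α) p₀ > 0` elementwise, then for any state `x ⪈ 0` and any next state
`0 ≤ x′ ≤ A x`, the risk bound strictly decreases:
`p₀ x − p₁ x′ ≥ p₀ x − p₁ A x = (1/α)[C − (1−α)p₀] x > 0`. -/
theorem stmt12 {n : ℕ} (α : ℝ) (hα : 0 < α ∧ α ≤ 1)
    (C : Fin n → ℝ) (A : Matrix (Fin n) (Fin n) ℝ) (hA : ∀ i j, 0 ≤ A i j)
    (p0 p1 : Fin n → ℝ) (hp0 : ∀ i, 0 ≤ p0 i) (hp1 : ∀ i, 0 ≤ p1 i)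
    (hbell : ∀ i, p0 i = C i + α * (p1 ᵥ* A) i)
    (hpos : ∀ i, 0 < C i - (1 - α) * p0 i)
    (x x' : Fin n → ℝ) (hx : ∀ i, 0 ≤ x i) (hxne : x ≠ 0)
    (hx' : ∀ i, 0 ≤ x' i ∧ x' i ≤ (A *ᵥ x) i) :
    p0 ⬝ᵥ x - p1 ⬝ᵥ (A *ᵥ x) ≤ p0 ⬝ᵥ x - p1 ⬝ᵥ x' ∧
    p0 ⬝ᵥ x - p1 ⬝ᵥ (A *ᵥ x) = (1 / α) * ((fun i => C i - (1 - α) * p0 i) ⬝ᵥ x) ∧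
    0 < p0 ⬝ᵥ x - p1 ⬝ᵥ (A *ᵥ x) := by
  obtain ⟨hα0, hα1⟩ := hα
  have hne : α ≠ 0 := ne_of_gt hα0
  have key : p0 ⬝ᵥ x - p1 ⬝ᵥ (A *ᵥ x) =
      (1 / α) * ((fun i => C i - (1 - α) * p0 i) ⬝ᵥ x) := by
    rw [dotProduct_mulVec]
    simp only [dotProduct, Finset.mul_sum, ← Finset.sum_sub_distrib]
    apply Finset.sum_congr rfl
    intro i _
    have h := hbell i
    have hq : (p1 ᵥ* A) i = (p0 i - C i) / α := by
      field_simp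
      linarith
    rw [hq]
    field_simp
    ring
  refine ⟨?_, key, ?_⟩
  · have : p1 ⬝ᵥ x' ≤ p1 ⬝ᵥ (A *ᵥ x) := by
      apply Finset.sum_le_sum
      intro i _
      exact mul_le_mul_of_nonneg_left (hx' i).2 (hp1 i)
    linarith
  · rw [key]
    apply mul_pos (by positivity)
    obtain ⟨j, hj⟩ : ∃ j, x j ≠ 0 := by
      by_contra h
      push_neg at h
      exact hxne (funext h)
    have hxj : 0 < x j := lt_of_le_of_ne (hx j) (Ne.symm hj)
    apply Finset.sum_pos'
    · intro i _
      exact mul_nonneg (le_of_lt (hpos i)) (hx i)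
    · exact ⟨j, Finset.mem_univ j, mul_pos (hpos j) hxj⟩
end

section
/- Let ε₂ > 0, and for a fixed column j let c_i > 0 (i = 1,…,n), Δ̄_j > δ̲_j > 0, β̄_ij ≥ 0, and U_ij ≥ 0 be given. Define the modified rates β_ij = β̄_ij e^{−U_ij} and δ_j = (1 − e^{−U_jj}) Δ̄_j + e^{−U_jj} δ̲_j. If Σ_{i} (c_i β̄_ij / (c_j Δ̄_j)) e^{−U_ij} + ((Δ̄_j − δ̲_j)/Δ̄_j) e^{−U_jj} + ε₂ ≤ 1 (the exponential-cone constraint log(Σ_i exp(log(c_i β̄_ij/(c_j Δ̄_j)) − U_ij) + exp(log((Δ̄_j − δ̲_j)/Δ̄_j) − U_jj) + ε₂) ≤ 0), then the modified rates satisfy the strict stability inequality Σ_i c_i β_ij < c_j δ_j. -/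
/-! Multiplying the cone constraint by `c_j Δ̄_j > 0` turns it into
`Σ_i c_i β_ij + c_j (Δ̄_j − δ̲_j) e^{−U_jj} ≤ (1 − ε₂) c_j Δ̄_j`, and
`c_j δ_j = c_j Δ̄_j − c_j (Δ̄_j − δ̲_j) e^{−U_jj}`; the margin `ε₂ c_j Δ̄_j > 0` makes the
inequality strict. -/

open Finset

theorem sum_add_lt_of_sum_div_add_div_add_le_one {ι : Type*} (s : Finset ι) (x : ι → ℝ)
    {y D ε : ℝ} (hD : 0 < D) (hε : 0 < ε) (h : ∑ i ∈ s, x i / D + y / D + ε ≤ 1) :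
    ∑ i ∈ s, x i + y < D := by
  rw [← sum_div, ← add_div] at h
  exact (div_lt_one hD).mp (by linarith)

theorem stmt13_general {n : ℕ} (ε₂ : ℝ) (hε₂ : 0 < ε₂)
    (c : Fin n → ℝ) (hc : ∀ i, 0 < c i) (j : Fin n)
    (Δbar δlow : ℝ) (hΔ : δlow < Δbar) (hδ : 0 < δlow)
    (βbar : Fin n → ℝ)
    (U : Fin n → ℝ)
    (hcone : ∑ i, (c i * βbar i / (c j * Δbar)) * Real.exp (-U i)
        + ((Δbar - δlow) / Δbar) * Real.exp (-U j) + ε₂ ≤ 1) :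
    ∑ i, c i * (βbar i * Real.exp (-U i))
      < c j * ((1 - Real.exp (-U j)) * Δbar + Real.exp (-U j) * δlow) := by
  have hD : 0 < c j * Δbar := mul_pos (hc j) (hδ.trans hΔ)
  have hscaled := sum_add_lt_of_sum_div_add_div_add_le_one univ
    (fun i ↦ c i * (βbar i * Real.exp (-U i)))
    (y := c j * ((Δbar - δlow) * Real.exp (-U j))) hD hε₂ <| by
      convert hcone using 3
      · congr 1 with i
        ring
      · field_simp [(hc j).ne']
  linarith

/-- the exponential-cone constraint
`Σ_i (c_i β̄_ij/(c_j Δ̄_j)) e^{−U_ij} + ((Δ̄_j − δ̲_j)/Δ̄_j) e^{−U_jj} + ε₂ ≤ 1`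
implies the strict stability inequality `Σ_i c_i β_ij < c_j δ_j` for the modified
rates `β_ij = β̄_ij e^{−U_ij}` and `δ_j = (1 − e^{−U_jj}) Δ̄_j + e^{−U_jj} δ̲_j`. -/
theorem stmt13 {n : ℕ} (ε₂ : ℝ) (hε₂ : 0 < ε₂)
    (c : Fin n → ℝ) (hc : ∀ i, 0 < c i) (j : Fin n)
    (Δbar δlow : ℝ) (hΔ : δlow < Δbar) (hδ : 0 < δlow)
    (βbar : Fin n → ℝ) (hβ : ∀ i, 0 ≤ βbar i)
    (U : Fin n → ℝ) (hU : ∀ i, 0 ≤ U i)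
    (hcone : ∑ i, (c i * βbar i / (c j * Δbar)) * Real.exp (-U i)
        + ((Δbar - δlow) / Δbar) * Real.exp (-U j) + ε₂ ≤ 1) :
    ∑ i, c i * (βbar i * Real.exp (-U i))
      < c j * ((1 - Real.exp (-U j)) * Δbar + Real.exp (-U j) * δlow) :=
  stmt13_general ε₂ hε₂ c hc j Δbar δlow hΔ hδ βbar U hcone
end
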